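/- Every p-Right subset of X* is a p-Right* set in X* if and only if for every Banach space Y and every Dunford-Pettis p-convergent operator T : X → Y, the bidual operator T** : X** → Y** is Dunford-Pettis p-convergent. -/

import Mathlib

open Filter Topology NormedSpace Bornology
open scoped ENNReal ContinuousMap ZeroAtInfty

/-- A sequence is weakly null. -/
def WeaklyNull {X : Type*} [NormedAddCommGroup X] [NormedSpace ℝ X] (x : ℕ → X) : Prop :=
  ∀ f : StrongDual ℝ X, Tendsto (fun n => f (x n)) atTop (𝓝 0)

/-- A sequence is weakly `p`-summable; for `p = ∞` this means weakly null. -/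
def WeaklyPSummable {X : Type*} [NormedAddCommGroup X] [NormedSpace ℝ X] (p : ℝ≥0∞)
    (x : ℕ → X) : Prop :=
  if p = ∞ then WeaklyNull x else ∀ f : StrongDual ℝ X, Memℓp (fun n => f (x n)) p

/-- A Dunford-Pettis subset of a Banach space: a bounded set on which every weakly null
sequence of functionals converges uniformly to zero. -/
def IsDunfordPettisSet {X : Type*} [NormedAddCommGroup X] [NormedSpace ℝ X] (A : Set X) : Prop :=
  IsBounded A ∧ ∀ f : ℕ → StrongDual ℝ X, WeaklyNull f →
    Tendsto (fun n => ⨆ a : A, |f n a.1|) atTop (𝓝 0)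

/-- A `p`-Right null sequence: weakly `p`-summable and a Dunford-Pettis set. -/
def PRightNull {X : Type*} [NormedAddCommGroup X] [NormedSpace ℝ X] (p : ℝ≥0∞)
    (x : ℕ → X) : Prop :=
  WeaklyPSummable p x ∧ IsDunfordPettisSet (Set.range x)

/-- A `p`-Right subset of the dual: every `p`-Right null sequence in `X` converges to `0`
uniformly on `K`. -/
def IsPRightSet {X : Type*} [NormedAddCommGroup X] [NormedSpace ℝ X] (p : ℝ≥0∞)
    (K : Set (StrongDual ℝ X)) : Prop :=
  IsBounded K ∧ ∀ x : ℕ → X, PRightNull p x →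
    Tendsto (fun n => ⨆ f : K, |f.1 (x n)|) atTop (𝓝 0)

/-- A `p`-Right* subset of `X`: every `p`-Right null sequence in `X*` converges to `0`
uniformly on `K`. -/
def IsPRightStarSet {X : Type*} [NormedAddCommGroup X] [NormedSpace ℝ X] (p : ℝ≥0∞)
    (K : Set X) : Prop :=
  IsBounded K ∧ ∀ f : ℕ → StrongDual ℝ X, PRightNull p f →
    Tendsto (fun n => ⨆ a : K, |f n a.1|) atTop (𝓝 0)

/-- A `p`-(V) subset of the dual. -/
def IsPVSet {X : Type*} [NormedAddCommGroup X] [NormedSpace ℝ X] (p : ℝ≥0∞)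
    (K : Set (StrongDual ℝ X)) : Prop :=
  IsBounded K ∧ ∀ x : ℕ → X, WeaklyPSummable p x →
    Tendsto (fun n => ⨆ f : K, |f.1 (x n)|) atTop (𝓝 0)

/-- A `p`-(V*) subset of `X`. -/
def IsPVStarSet {X : Type*} [NormedAddCommGroup X] [NormedSpace ℝ X] (p : ℝ≥0∞)
    (K : Set X) : Prop :=
  IsBounded K ∧ ∀ f : ℕ → StrongDual ℝ X, WeaklyPSummable p f →
    Tendsto (fun n => ⨆ a : K, |f n a.1|) atTop (𝓝 0)

/-- A Dunford-Pettis `p`-convergent operator maps `p`-Right null sequences to norm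
null sequences. -/
def DPpConvergent {X Y : Type*} [NormedAddCommGroup X] [NormedSpace ℝ X] [NormedAddCommGroup Y]
    [NormedSpace ℝ Y] (p : ℝ≥0∞) (T : X →L[ℝ] Y) : Prop :=
  ∀ x : ℕ → X, PRightNull p x → Tendsto (fun n => ‖T (x n)‖) atTop (𝓝 0)

/-- The adjoint of a bounded operator between normed spaces. -/
noncomputable def adjointOp {X Y : Type*} [NormedAddCommGroup X] [NormedSpace ℝ X]
    [NormedAddCommGroup Y] [NormedSpace ℝ Y] (T : X →L[ℝ] Y) : StrongDual ℝ Y →L[ℝ] StrongDual ℝ X :=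
  (ContinuousLinearMap.compL ℝ X Y ℝ).flip T

/-- Weak convergence of a sequence. -/
def WeaklyConvTo {X : Type*} [NormedAddCommGroup X] [NormedSpace ℝ X] (x : ℕ → X) (a : X) : Prop :=
  ∀ f : StrongDual ℝ X, Tendsto (fun n => f (x n)) atTop (𝓝 (f a))

/-- A relatively weakly compact set (sequentially): every sequence in `A` has a weakly
convergent subsequence with limit in the space. -/
def RelWeaklyCompact {X : Type*} [NormedAddCommGroup X] [NormedSpace ℝ X] (A : Set X) : Prop :=
  ∀ x : ℕ → X, (∀ n, x n ∈ A) →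
    ∃ a : X, ∃ φ : ℕ → ℕ, StrictMono φ ∧ WeaklyConvTo (fun n => x (φ n)) a

/-- A relatively weakly `q`-compact set: every sequence in `A` has a weakly `q`-convergent
subsequence with limit in the space. -/
def RelWeaklyQCompact {X : Type*} [NormedAddCommGroup X] [NormedSpace ℝ X] (q : ℝ≥0∞)
    (A : Set X) : Prop :=
  ∀ x : ℕ → X, (∀ n, x n ∈ A) →
    ∃ a : X, ∃ φ : ℕ → ℕ, StrictMono φ ∧ WeaklyPSummable q (fun n => x (φ n) - a)

/-- The `p`-sequentially Right property: every `p`-Right subset of the dual is relatively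
weakly compact. -/
def PSR (p : ℝ≥0∞) (X : Type*) [NormedAddCommGroup X] [NormedSpace ℝ X] : Prop :=
  ∀ K : Set (StrongDual ℝ X), IsPRightSet p K → RelWeaklyCompact K

/-- The `p`-sequentially Right* property: every `p`-Right* subset is relatively weakly
compact. -/
def PSRStar (p : ℝ≥0∞) (X : Type*) [NormedAddCommGroup X] [NormedSpace ℝ X] : Prop :=
  ∀ K : Set X, IsPRightStarSet p K → RelWeaklyCompact K

section Helpers

variable {Z : Type*} [NormedAddCommGroup Z] [NormedSpace ℝ Z]

lemma bdd_eval' {K : Set (StrongDual ℝ Z)} (hK : IsBounded K) (x : Z) :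
    BddAbove (Set.range fun f : K => |f.1 x|) := by
  obtain ⟨C, hC⟩ := isBounded_iff_forall_norm_le.1 hK
  refine ⟨C * ‖x‖, ?_⟩
  rintro - ⟨f, rfl⟩
  calc |f.1 x| ≤ ‖f.1‖ * ‖x‖ := f.1.le_opNorm x
    _ ≤ C * ‖x‖ := mul_le_mul_of_nonneg_right (hC f.1 f.2) (norm_nonneg x)

lemma bdd_eval_of_bounded {K : Set Z} (hK : IsBounded K) (F : StrongDual ℝ Z) :
    BddAbove (Set.range fun a : K => |F a.1|) := by
  obtain ⟨C, hC⟩ := isBounded_iff_forall_norm_le.1 hK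
  refine ⟨‖F‖ * C, ?_⟩
  rintro - ⟨a, rfl⟩
  calc |F a.1| ≤ ‖F‖ * ‖a.1‖ := F.le_opNorm a.1
    _ ≤ ‖F‖ * C := by
        exact mul_le_mul_of_nonneg_left (hC a.1 a.2) (norm_nonneg F)

lemma weaklyPSummable_subseq {p : ℝ≥0∞} (hp : 1 ≤ p) {x : ℕ → Z}
    (hx : WeaklyPSummable p x) {φ : ℕ → ℕ} (hφ : StrictMono φ) :
    WeaklyPSummable p (fun n => x (φ n)) := by
  unfold WeaklyPSummable at *
  by_cases hI : p = ∞
  · simp only [hI, if_true] at hx ⊢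
    exact fun f => (hx f).comp hφ.tendsto_atTop
  · simp only [hI, if_false] at hx ⊢
    intro f
    have hpt : 0 < p.toReal :=
      ENNReal.toReal_pos (by rintro rfl; simp at hp) hI
    have := (memℓp_gen_iff hpt).1 (hx f)
    exact memℓp_gen (this.comp_injective hφ.injective)

lemma isDP_subset {A B : Set Z} (hBA : A ⊆ B) (hA : A.Nonempty)
    (hB : IsDunfordPettisSet B) : IsDunfordPettisSet A := by
  refine ⟨hB.1.subset hBA, fun f hf => ?_⟩
  have hBnd := hB.1
  refine squeeze_zero (fun n => ?_) (fun n => ?_) (hB.2 f hf)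
  · exact Real.iSup_nonneg fun a => abs_nonneg _
  · have hne : Nonempty A := hA.to_subtype
    refine ciSup_le fun a => ?_
    exact le_ciSup (bdd_eval_of_bounded hBnd (f n)) (⟨a.1, hBA a.2⟩ : B)

lemma pRightNull_subseq {p : ℝ≥0∞} (hp : 1 ≤ p) {x : ℕ → Z}
    (hx : PRightNull p x) {φ : ℕ → ℕ} (hφ : StrictMono φ) :
    PRightNull p (fun n => x (φ n)) := by
  refine ⟨weaklyPSummable_subseq hp hx.1 hφ, ?_⟩
  refine isDP_subset ?_ ⟨x (φ 0), ⟨0, rfl⟩⟩ hx.2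
  rintro - ⟨n, rfl⟩; exact ⟨φ n, rfl⟩

variable {X : Type*} [NormedAddCommGroup X] [NormedSpace ℝ X]

/-- The operator `X → ℓ^∞` induced by a bounded sequence of functionals. -/
noncomputable def seqOp (b : ℕ → StrongDual ℝ X) (C : ℝ) (hC : 0 ≤ C)
    (hb : ∀ k, ‖b k‖ ≤ C) : X →L[ℝ] lp (fun _ : ℕ => ℝ) ∞ :=
  LinearMap.mkContinuous
    { toFun := fun x => ⟨fun k => b k x, memℓp_infty ⟨C * ‖x‖, by
        rintro - ⟨k, rfl⟩
        calc ‖b k x‖ ≤ ‖b k‖ * ‖x‖ := (b k).le_opNorm x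
          _ ≤ C * ‖x‖ := mul_le_mul_of_nonneg_right (hb k) (norm_nonneg x)⟩⟩
      map_add' := fun x y => by
        apply Subtype.ext; funext k
        rw [lp.coeFn_add, Pi.add_apply]
        exact map_add (b k) x y
      map_smul' := fun c x => by
        apply Subtype.ext; funext k
        rw [lp.coeFn_smul, Pi.smul_apply]
        exact map_smul (b k) c x }
    C
    (fun x => by
      refine lp.norm_le_of_forall_le (mul_nonneg hC (norm_nonneg x)) fun k => ?_
      calc ‖b k x‖ ≤ ‖b k‖ * ‖x‖ := (b k).le_opNorm x
        _ ≤ C * ‖x‖ := mul_le_mul_of_nonneg_right (hb k) (norm_nonneg x))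

@[simp] lemma seqOp_apply (b : ℕ → StrongDual ℝ X) (C : ℝ) (hC : 0 ≤ C)
    (hb : ∀ k, ‖b k‖ ≤ C) (x : X) (k : ℕ) :
    (seqOp b C hC hb x : ∀ _ : ℕ, ℝ) k = b k x := rfl

/-- Evaluation at a coordinate, as a functional on `ℓ^∞`. -/
noncomputable def evalInfty (k : ℕ) : StrongDual ℝ (lp (fun _ : ℕ => ℝ) ∞) :=
  LinearMap.mkContinuous
    { toFun := fun f => f k
      map_add' := fun f g => by simp [lp.coeFn_add]
      map_smul' := fun c f => by simp [lp.coeFn_smul] }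
    1
    (fun f => by
      rw [one_mul]
      exact lp.norm_apply_le_norm ENNReal.top_ne_zero f k)

lemma evalInfty_norm_le (k : ℕ) : ‖evalInfty k‖ ≤ 1 :=
  LinearMap.mkContinuous_norm_le _ zero_le_one _

@[simp] lemma evalInfty_apply (k : ℕ) (f : lp (fun _ : ℕ => ℝ) ∞) :
    evalInfty k f = f k := rfl

@[simp] lemma adjointOp_apply {Y : Type*} [NormedAddCommGroup Y] [NormedSpace ℝ Y]
    (T : X →L[ℝ] Y) (g : StrongDual ℝ Y) (x : X) : adjointOp T g x = g (T x) := rfl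

end Helpers

/-- every `p`-Right subset of `X*` is a `p`-Right* set in `X*` iff for every
Banach space `Y` and every Dunford-Pettis `p`-convergent `T : X → Y`, the bidual operator
`T** ` is Dunford-Pettis `p`-convergent. -/
theorem stmt4 {p : ℝ≥0∞} (hp : 1 ≤ p) {X : Type} [NormedAddCommGroup X] [NormedSpace ℝ X]
    [CompleteSpace X] :
    (∀ K : Set (StrongDual ℝ X), IsPRightSet p K → IsPRightStarSet p K) ↔
      ∀ (Y : Type) (_ : NormedAddCommGroup Y) (_ : NormedSpace ℝ Y) (_ : CompleteSpace Y)
        (T : X →L[ℝ] Y), DPpConvergent p T → DPpConvergent p (adjointOp (adjointOp T)) := by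
  constructor
  · -- every p-Right set is p-Right* ⟹ biduals of DP p-convergent operators are DP p-conv.
    intro H Y _ _ _ T hT F hF
    set K : Set (StrongDual ℝ X) := adjointOp T '' Metric.closedBall 0 1 with hKdef
    have hKb : IsBounded K := by
      rw [isBounded_iff_forall_norm_le]
      refine ⟨‖T‖, ?_⟩
      rintro - ⟨g, hg, rfl⟩
      refine ContinuousLinearMap.opNorm_le_bound _ (norm_nonneg T) fun x => ?_
      calc ‖g (T x)‖ ≤ ‖g‖ * ‖T x‖ := g.le_opNorm _
        _ ≤ 1 * ‖T x‖ :=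
            mul_le_mul_of_nonneg_right (mem_closedBall_zero_iff.1 hg) (norm_nonneg _)
        _ = ‖T x‖ := one_mul _
        _ ≤ ‖T‖ * ‖x‖ := T.le_opNorm x
    have hK : IsPRightSet p K := by
      refine ⟨hKb, fun x hx => ?_⟩
      refine squeeze_zero (fun n => Real.iSup_nonneg fun a => abs_nonneg _)
        (fun n => ?_) (hT x hx)
      refine Real.iSup_le (fun a => ?_) (norm_nonneg _)
      obtain ⟨g, hg, hga⟩ := a.2
      rw [← hga]
      calc |adjointOp T g (x n)| ≤ ‖g‖ * ‖T (x n)‖ := g.le_opNorm _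
        _ ≤ 1 * ‖T (x n)‖ :=
            mul_le_mul_of_nonneg_right (mem_closedBall_zero_iff.1 hg) (norm_nonneg _)
        _ = ‖T (x n)‖ := one_mul _
    have h2 := (H K hK).2 F hF
    refine squeeze_zero (fun n => norm_nonneg _) (fun n => ?_) h2
    refine ContinuousLinearMap.opNorm_le_bound _
      (Real.iSup_nonneg fun a => abs_nonneg _) fun g => ?_
    rcases eq_or_ne g 0 with rfl | hg
    · simp [Real.iSup_nonneg fun a : K => abs_nonneg (F n a.1)]
    · have hgn : ‖g‖ ≠ 0 := norm_ne_zero_iff.2 hg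
      set u : StrongDual ℝ Y := ‖g‖⁻¹ • g with hu_def
      have hu : u ∈ Metric.closedBall (0 : StrongDual ℝ Y) 1 := by
        rw [mem_closedBall_zero_iff, hu_def, norm_smul, norm_inv, norm_norm]
        exact le_of_eq (inv_mul_cancel₀ hgn)
      have hmem : adjointOp T u ∈ K := ⟨u, hu, rfl⟩
      have hle : |F n (adjointOp T u)| ≤ ⨆ a : K, |F n a.1| :=
        le_ciSup (bdd_eval_of_bounded hKb (F n)) (⟨_, hmem⟩ : K)
      have hgu : ‖g‖ • u = g := smul_inv_smul₀ hgn g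
      calc ‖adjointOp (adjointOp T) (F n) g‖
          = |F n (adjointOp T (‖g‖ • u))| := by rw [hgu]; rfl
        _ = |‖g‖ * F n (adjointOp T u)| := by rw [map_smul, map_smul]; rfl
        _ = ‖g‖ * |F n (adjointOp T u)| := by rw [abs_mul, abs_norm]
        _ ≤ ‖g‖ * ⨆ a : K, |F n a.1| :=
            mul_le_mul_of_nonneg_left hle (norm_nonneg g)
        _ = (⨆ a : K, |F n a.1|) * ‖g‖ := mul_comm _ _
  · -- converse
    intro H K hK
    refine ⟨hK.1, fun F hF => ?_⟩
    by_contra hcon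
    rcases K.eq_empty_or_nonempty with rfl | hKne
    · refine hcon ?_
      have hz : ∀ n, (⨆ a : (∅ : Set (StrongDual ℝ X)), |F n a.1|) = 0 := fun n =>
        Real.iSup_of_isEmpty _
      simp only [hz]
      exact tendsto_const_nhds
    obtain ⟨C, hC⟩ := isBounded_iff_forall_norm_le.1 hK.1
    rw [Metric.tendsto_atTop] at hcon
    push_neg at hcon
    obtain ⟨ε, hε, hfreq⟩ := hcon
    obtain ⟨φ, hφ, hφε⟩ := Filter.extraction_of_frequently_atTop
      (Filter.frequently_atTop.2 hfreq)
    have hKne' : Nonempty K := hKne.to_subtype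
    have hsup : ∀ k, ε / 2 < ⨆ a : K, |F (φ k) a.1| := by
      intro k
      have h1 := hφε k
      rw [Real.dist_eq, sub_zero,
        abs_of_nonneg (Real.iSup_nonneg fun a => abs_nonneg _)] at h1
      linarith
    choose a ha using fun k => exists_lt_of_lt_ciSup (hsup k)
    set C' := max C 0 with hC'def
    have hC' : (0 : ℝ) ≤ C' := le_max_right _ _
    have hbk : ∀ k, ‖(a k).1‖ ≤ C' := fun k => le_max_of_le_left (hC _ (a k).2)
    set T := seqOp (fun k => (a k).1) C' hC' hbk with hTdef
    have hTdp : DPpConvergent p T := by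
      intro x hx
      refine squeeze_zero (fun n => norm_nonneg _) (fun n => ?_) (hK.2 x hx)
      refine lp.norm_le_of_forall_le (Real.iSup_nonneg fun f => abs_nonneg _) fun k => ?_
      have hval : ‖(T (x n) : ∀ _ : ℕ, ℝ) k‖ = |(a k).1 (x n)| := rfl
      rw [hval]
      exact le_ciSup (bdd_eval' hK.1 (x n)) (a k)
    have hnorm := H (lp (fun _ : ℕ => ℝ) ∞) inferInstance inferInstance inferInstance T hTdp
      (fun k => F (φ k)) (pRightNull_subseq hp hF hφ)
    have hlow : ∀ k, ε / 2 < ‖adjointOp (adjointOp T) (F (φ k))‖ := by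
      intro k
      have h1 : adjointOp T (evalInfty k) = (a k).1 := by
        ext x
        rfl
      have h2 : |F (φ k) ((a k).1)| ≤ ‖adjointOp (adjointOp T) (F (φ k))‖ := by
        rw [← h1]
        calc |F (φ k) (adjointOp T (evalInfty k))|
            = ‖adjointOp (adjointOp T) (F (φ k)) (evalInfty k)‖ := rfl
          _ ≤ ‖adjointOp (adjointOp T) (F (φ k))‖ * ‖evalInfty k‖ :=
              ContinuousLinearMap.le_opNorm _ _
          _ ≤ ‖adjointOp (adjointOp T) (F (φ k))‖ * 1 :=
              mul_le_mul_of_nonneg_left (evalInfty_norm_le k) (norm_nonneg _)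
          _ = ‖adjointOp (adjointOp T) (F (φ k))‖ := mul_one _
      exact lt_of_lt_of_le (ha k) h2
    obtain ⟨k, hk⟩ := (hnorm.eventually (gt_mem_nhds (half_pos hε))).exists
    exact absurd (hlow k) (not_lt.2 hk.le)
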